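/- (Linear programming reformulation, Theorem 3.) With the data and the linear robust problem (R'_K) as defined in the context, the optimal value of (R'_K) equals the optimal value of the linear program (R''_K): minimize c_K(𝐱^b,𝐱^r) + p*·z over (𝐱^b,𝐱^r) ∈ X_K, 𝐦 ∈ ℝ^K, z ∈ ℝ, λ⁺, λ⁻, θ⁺, θ⁻ ∈ ℝ₊^K and Λ⁺, Λ⁻, Θ⁺, Θ⁻ ∈ ℝ₊^{K×K}, subject to: x^r_k + x^b_k ≤ ȳ⁺_k and x^r_k − x^b_k ≤ ȳ⁻_k for all k; m_k ≥ η⁺ x^r_k and m_k ≥ (1/η⁻) x^r_k − Δη·x^b_k for all k; Σ_{l=1}^{k} [ Δt(η⁺ x^b_l + Λ⁺_{k,l} − d_l) + γ·Θ⁺_{k,l} ] ≤ ȳ − ȳ₀ for all k ∈ {0,…,K}; Σ_{l=1}^{k} [ Δt(η⁺ x^b_l − Λ⁻_{k,l} − d_l) − γ·Θ⁻_{k,l} ] ≥ y̲ − y̲₀ for all k ∈ {0,…,K}; Σ_{k=1}^{K} [ Δt(η⁺ x^b_k + λ⁺_k − d_k) + γ̂·θ⁺_k ] ≤ y* − ŷ̄₀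 + z; Σ_{k=1}^{K} [ Δt(η⁺ x^b_k − λ⁻_k − d_k) − γ̂·θ⁻_k ] ≥ y* − ŷ̲₀ − z; Λ⁺_{k,l} + Σ_{i=l}^{I(k,l)} Θ⁺_{k,i} ≥ η⁺ x^r_l and Λ⁻_{k,l} + Σ_{i=l}^{I(k,l)} Θ⁻_{k,i} ≥ m_l for all k,l ∈ {1,…,K} with l ≤ k; and λ⁺_k + Σ_{i=k}^{Î(K,k)} θ⁺_i ≥ η⁺ x^r_k and λ⁻_k + Σ_{i=k}^{Î(K,k)} θ⁻_i ≥ m_k for all k ∈ {1,…,K}; where I(k,l) = min{k, l + Γ/Δt − 1} and Î(k,l) = min{k, l + Γ̂/Δt − 1}. -/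

import Mathlib

/-!
Every robust constraint of (R'_K) bounds the optimal value of an inner linear program: maximise
`∑ a_l δ_l` (with `a = η⁺ x^r` for the upper state-of-charge bounds and `a = m` for the lower ones)
over the polytope `0 ≤ δ ≤ 1`, with all window sums at most `γ/Δt`. This polytope contains `0`,
so LP strong duality applies: the bound holds iff some nonnegative dual solution `(Λ, Θ)` has
objective below it, and these dual solutions are exactly the extra variables of (R''_K). The two
problems therefore have the same feasible `(𝐱^b, 𝐱^r, 𝐦, z)` and the same optimal value. Strong
duality is derived from Farkas' lemma, i.e. from the hyperplane separation theorem and the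
closedness of finitely generated cones (conic Carathéodory).
-/

open MeasureTheory Set

noncomputable section

/-- The continuous-time uncertainty set `D` of measurable frequency-deviation
scenarios `δ : [0,T] → [-1,1]` whose total absolute deviation over every
backward window of length `Γ` is at most `γ`. -/
def Dset (T Γ γ : ℝ) : Set (ℝ → ℝ) :=
  {δ | Measurable δ ∧ (∀ t ∈ Icc (0:ℝ) T, δ t ∈ Icc (-1:ℝ) 1) ∧
    ∀ t ∈ Icc (0:ℝ) T, (∫ s in (max (t - Γ) 0)..t, |δ s|) ≤ γ}

/-- The nonnegative part `D⁺` of the continuous uncertainty set. -/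
def DsetPlus (T Γ γ : ℝ) : Set (ℝ → ℝ) :=
  Dset T Γ γ ∩ {δ | ∀ t ∈ Icc (0:ℝ) T, δ t ∈ Icc (0:ℝ) 1}

/-- The discrete uncertainty set `D_K` (with `0`-based indexing): vectors in
`[-1,1]^K` whose sum of absolute values over each backward window of `W = Γ/Δt`
periods is at most `g = γ/Δt`. -/
def DK (K W g : ℕ) : Set (Fin K → ℝ) :=
  {δ | (∀ l, |δ l| ≤ 1) ∧ ∀ k : Fin K,
    (∑ l ∈ Finset.univ.filter
      (fun l : Fin K => (k : ℕ) + 1 - W ≤ (l : ℕ) ∧ (l : ℕ) ≤ (k : ℕ)), |δ l|) ≤ (g : ℝ)}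

/-- The nonnegative part `D_K⁺` of the discrete uncertainty set. -/
def DKplus (K W g : ℕ) : Set (Fin K → ℝ) :=
  DK K W g ∩ {δ | ∀ l, 0 ≤ δ l}

/-- The lifting operator `L` mapping a vector to the piecewise constant function
with value `v k` on `[kΔt, (k+1)Δt)` (0-based), and `v (K-1)` at `t = KΔt`. -/
def lift (Δt : ℝ) {K : ℕ} (v : Fin K → ℝ) : ℝ → ℝ := fun t =>
  if h : min (⌊t / Δt⌋.toNat) (K - 1) < K then v ⟨min (⌊t / Δt⌋.toNat) (K - 1), h⟩ else 0

/-- The averaging operator `L†` mapping a function to its vector of averages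
over the trading intervals. -/
def avg (Δt : ℝ) (K : ℕ) (w : ℝ → ℝ) : Fin K → ℝ := fun k =>
  (1 / Δt) * ∫ s in (((k : ℕ) : ℝ) * Δt)..((((k : ℕ) : ℝ) + 1) * Δt), w s

/-- The integrand of the continuous-time state-of-charge. -/
def socIntegrand (ηp ηm : ℝ) (xb xr δ d : ℝ → ℝ) (s : ℝ) : ℝ :=
  ηp * max (xb s + δ s * xr s) 0 - (1 / ηm) * max (-(xb s + δ s * xr s)) 0 - d s

/-- The continuous-time state-of-charge `y(x^b, x^r, δ, y₀, t)`. -/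
def soc (ηp ηm : ℝ) (xb xr δ d : ℝ → ℝ) (y0 t : ℝ) : ℝ :=
  y0 + ∫ s in (0:ℝ)..t, socIntegrand ηp ηm xb xr δ d s

/-- The discrete-time state-of-charge `y_k(𝐱^b, 𝐱^r, 𝛅, y₀)` (0-based indexing:
the sum extends over the first `k` components). -/
def ysoc (Δt ηp ηm : ℝ) {K : ℕ} (xb xr δ d : Fin K → ℝ) (y0 : ℝ) (k : ℕ) : ℝ :=
  y0 + Δt * ∑ l ∈ Finset.univ.filter (fun l : Fin K => (l : ℕ) < k),
    (ηp * max (xb l + δ l * xr l) 0 - (1 / ηm) * max (-(xb l + δ l * xr l)) 0 - d l)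

/-- Feasibility of `(𝐱^b,𝐱^r,𝐦,z)` in the linear robust problem (R'_K). -/
def RprimeFeasible (Δt ηp ηm : ℝ) {K : ℕ} (W g Wh gh : ℕ) (d ybarp ybarm : Fin K → ℝ)
    (ylo yhi yl0 yu0 ylh yuh ystar : ℝ)
    (p : (Fin K → ℝ) × (Fin K → ℝ)) (m : Fin K → ℝ) (z : ℝ) : Prop :=
  (∀ j : Fin K, p.2 j + p.1 j ≤ ybarp j ∧ p.2 j - p.1 j ≤ ybarm j) ∧
  (∀ j : Fin K, ηp * p.2 j ≤ m j ∧ (1 / ηm) * p.2 j - (1 / ηm - ηp) * p.1 j ≤ m j) ∧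
  (∀ δ ∈ DKplus K W g, ∀ k ≤ K,
    yu0 + Δt * (∑ l ∈ Finset.univ.filter (fun l : Fin K => (l : ℕ) < k),
      (ηp * (p.1 l + δ l * p.2 l) - d l)) ≤ yhi) ∧
  (∀ δ ∈ DKplus K W g, ∀ k ≤ K,
    ylo ≤ yl0 + Δt * (∑ l ∈ Finset.univ.filter (fun l : Fin K => (l : ℕ) < k),
      (ηp * p.1 l - m l * δ l - d l))) ∧
  (∀ δ ∈ DKplus K Wh gh,
    yuh - z + Δt * (∑ j, (ηp * (p.1 j + δ j * p.2 j) - d j)) ≤ ystar) ∧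
  (∀ δ ∈ DKplus K Wh gh,
    ystar ≤ ylh + z + Δt * (∑ j, (ηp * p.1 j - m j * δ j - d j)))

/-- Feasibility of `(𝐱^b,𝐱^r,𝐦,z)` together with the dual multipliers
`λ⁺,λ⁻,θ⁺,θ⁻,Λ⁺,Λ⁻,Θ⁺,Θ⁻` in the linear program (R''_K).  Rows of the matrix
variables are indexed by `kr : Fin K`, corresponding to `k = kr + 1`; the
constraints of (R'_K)/(R''_K) for `k = 0` reduce to `ȳ₀ ≤ ȳ` and `y̲ ≤ y̲₀`. -/
def RdoubleFeasible (Δt ηp ηm γ γh : ℝ) {K : ℕ} (W Wh : ℕ) (d ybarp ybarm : Fin K → ℝ)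
    (ylo yhi yl0 yu0 ylh yuh ystar : ℝ)
    (p : (Fin K → ℝ) × (Fin K → ℝ)) (m : Fin K → ℝ) (z : ℝ)
    (lp lm tp tm : Fin K → ℝ) (Lp Lm Tp Tm : Fin K → Fin K → ℝ) : Prop :=
  (∀ j : Fin K, 0 ≤ lp j ∧ 0 ≤ lm j ∧ 0 ≤ tp j ∧ 0 ≤ tm j) ∧
  (∀ i j : Fin K, 0 ≤ Lp i j ∧ 0 ≤ Lm i j ∧ 0 ≤ Tp i j ∧ 0 ≤ Tm i j) ∧
  (∀ j : Fin K, p.2 j + p.1 j ≤ ybarp j ∧ p.2 j - p.1 j ≤ ybarm j) ∧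
  (∀ j : Fin K, ηp * p.2 j ≤ m j ∧ (1 / ηm) * p.2 j - (1 / ηm - ηp) * p.1 j ≤ m j) ∧
  yu0 ≤ yhi ∧ ylo ≤ yl0 ∧
  (∀ kr : Fin K,
    (∑ l ∈ Finset.univ.filter (fun l : Fin K => (l : ℕ) ≤ (kr : ℕ)),
      (Δt * (ηp * p.1 l + Lp kr l - d l) + γ * Tp kr l)) ≤ yhi - yu0) ∧
  (∀ kr : Fin K,
    ylo - yl0 ≤ ∑ l ∈ Finset.univ.filter (fun l : Fin K => (l : ℕ) ≤ (kr : ℕ)),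
      (Δt * (ηp * p.1 l - Lm kr l - d l) - γ * Tm kr l)) ∧
  (∑ j, (Δt * (ηp * p.1 j + lp j - d j) + γh * tp j)) ≤ ystar - yuh + z ∧
  ystar - ylh - z ≤ (∑ j, (Δt * (ηp * p.1 j - lm j - d j) - γh * tm j)) ∧
  (∀ kr l : Fin K, (l : ℕ) ≤ (kr : ℕ) →
    ηp * p.2 l ≤ Lp kr l + ∑ i ∈ Finset.univ.filter
      (fun i : Fin K => (l : ℕ) ≤ (i : ℕ) ∧ (i : ℕ) ≤ min (kr : ℕ) ((l : ℕ) + W - 1)), Tp kr i) ∧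
  (∀ kr l : Fin K, (l : ℕ) ≤ (kr : ℕ) →
    m l ≤ Lm kr l + ∑ i ∈ Finset.univ.filter
      (fun i : Fin K => (l : ℕ) ≤ (i : ℕ) ∧ (i : ℕ) ≤ min (kr : ℕ) ((l : ℕ) + W - 1)), Tm kr i) ∧
  (∀ j : Fin K,
    ηp * p.2 j ≤ lp j + ∑ i ∈ Finset.univ.filter
      (fun i : Fin K => (j : ℕ) ≤ (i : ℕ) ∧ (i : ℕ) ≤ min (K - 1) ((j : ℕ) + Wh - 1)), tp i) ∧
  (∀ j : Fin K,
    m j ≤ lm j + ∑ i ∈ Finset.univ.filter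
      (fun i : Fin K => (j : ℕ) ≤ (i : ℕ) ∧ (i : ℕ) ≤ min (K - 1) ((j : ℕ) + Wh - 1)), tm i)

open Matrix

section ConicHull

variable {ι E : Type*} [AddCommGroup E]

/-- **Conic Carathéodory theorem**. -/
theorem exists_linearIndepOn_sum_smul_eq {𝕜 : Type*} [Field 𝕜] [LinearOrder 𝕜]
    [IsStrictOrderedRing 𝕜] [Module 𝕜 E] (v : ι → E) (s : Finset ι) (c : ι → 𝕜)
    (hc : ∀ i ∈ s, 0 ≤ c i) :
    ∃ t : Finset ι, LinearIndepOn 𝕜 v t ∧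
      ∃ c' : ι → 𝕜, (∀ i ∈ t, 0 ≤ c' i) ∧ ∑ i ∈ t, c' i • v i = ∑ i ∈ s, c i • v i := by
  classical
  induction s using Finset.strongInduction generalizing c with
  | H s ih =>
  by_cases hs : LinearIndepOn 𝕜 v s
  · exact ⟨s, hs, c, hc, rfl⟩
  -- Subtract from `c` the largest multiple of a relation `g` that keeps it nonnegative on `s`.
  suffices key : ∀ g : ι → 𝕜, ∑ i ∈ s, g i • v i = 0 → (∃ j ∈ s, 0 < g j) →
      ∃ t : Finset ι, LinearIndepOn 𝕜 v t ∧
        ∃ c' : ι → 𝕜, (∀ i ∈ t, 0 ≤ c' i) ∧ ∑ i ∈ t, c' i • v i = ∑ i ∈ s, c i • v i by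
    obtain ⟨g, hg, i, hi, hgi⟩ := not_linearIndepOn_finset_iff.mp hs
    rcases hgi.lt_or_gt with hneg | hpos
    · exact key (-g) (by simp [Finset.sum_neg_distrib, hg]) ⟨i, hi, by simpa using hneg⟩
    · exact key g hg ⟨i, hi, hpos⟩
  rintro g hg ⟨j, hjs, hgj⟩
  obtain ⟨k, hk, hmin⟩ := (s.filter (0 < g ·)).exists_min_image (fun i => c i / g i)
    ⟨j, Finset.mem_filter.mpr ⟨hjs, hgj⟩⟩
  rw [Finset.mem_filter] at hk
  set r := c k / g k
  have hc' : ∀ i ∈ s, 0 ≤ c i - r * g i := by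
    intro i hi
    rcases lt_or_ge 0 (g i) with hgi | hgi
    · have := hmin i (Finset.mem_filter.mpr ⟨hi, hgi⟩)
      rw [le_div_iff₀ hgi] at this
      linarith
    · nlinarith [hc i hi, hc k hk.1, div_nonneg (hc k hk.1) hk.2.le]
  have hck : c k - r * g k = 0 := by rw [div_mul_cancel₀ _ hk.2.ne', sub_self]
  have hsum : ∑ i ∈ s.erase k, (c i - r * g i) • v i = ∑ i ∈ s, c i • v i := by
    rw [Finset.sum_erase _ (by rw [hck, zero_smul])]
    simp only [sub_smul, Finset.sum_sub_distrib, mul_smul, ← Finset.smul_sum, hg, smul_zero,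
      sub_zero]
  obtain ⟨t, ht, c', hc'', heq⟩ := ih (s.erase k) (Finset.erase_ssubset hk.1)
    (fun i => c i - r * g i) (fun i hi => hc' i (Finset.mem_of_mem_erase hi))
  exact ⟨t, ht, c', hc'', heq.trans hsum⟩

variable [Module ℝ E] [TopologicalSpace E] [IsTopologicalAddGroup E] [ContinuousSMul ℝ E]
  [T2Space E]

theorem isClosed_setOf_nonneg_sum_smul_of_linearIndepOn {v : ι → E} {s : Finset ι}
    (hs : LinearIndepOn ℝ v s) :
    IsClosed {x | ∃ c : ι → ℝ, (∀ i ∈ s, 0 ≤ c i) ∧ ∑ i ∈ s, c i • v i = x} := by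
  classical
  let L := Fintype.linearCombination ℝ (fun i : s => v i)
  have hL : Topology.IsClosedEmbedding L :=
    LinearMap.isClosedEmbedding_of_injective
      (LinearMap.ker_eq_bot.mpr hs.fintypeLinearCombination_injective)
  convert hL.isClosedMap _ (isClosed_Ici (a := (0 : s → ℝ))) using 1
  ext x
  constructor
  · rintro ⟨c, hc, rfl⟩
    exact ⟨fun i => c i, fun i => hc i i.2, by
      simp [L, Fintype.linearCombination_apply, ← Finset.sum_coe_sort s]⟩
  · rintro ⟨c, hc, rfl⟩
    refine ⟨fun i => if h : i ∈ s then c ⟨i, h⟩ else 0,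
      fun i hi => by simpa [hi] using hc ⟨i, hi⟩, ?_⟩
    simp [L, Fintype.linearCombination_apply, ← Finset.sum_coe_sort s]

theorem isClosed_setOf_nonneg_sum_smul [Fintype ι] (v : ι → E) :
    IsClosed {x | ∃ c : ι → ℝ, 0 ≤ c ∧ ∑ i, c i • v i = x} := by
  classical
  have : {x | ∃ c : ι → ℝ, 0 ≤ c ∧ ∑ i, c i • v i = x} =
      ⋃ t ∈ {t : Finset ι | LinearIndepOn ℝ v t},
        {x | ∃ c : ι → ℝ, (∀ i ∈ t, 0 ≤ c i) ∧ ∑ i ∈ t, c i • v i = x} := by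
    ext x
    simp only [Set.mem_ofPred_eq, Set.mem_iUnion, exists_prop]
    constructor
    · rintro ⟨c, hc, rfl⟩
      exact exists_linearIndepOn_sum_smul_eq v Finset.univ c fun i _ => hc i
    · rintro ⟨t, -, c, hc, rfl⟩
      refine ⟨fun i => if i ∈ t then c i else 0, fun i => ?_,
        by simp [ite_smul, Finset.sum_ite_mem]⟩
      by_cases h : i ∈ t <;> simp [h, hc]
  rw [this]
  exact (Set.toFinite _).isClosed_biUnion fun t ht =>
    isClosed_setOf_nonneg_sum_smul_of_linearIndepOn ht

end ConicHull

namespace Matrix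

theorem dotProduct_nonpos_of_forall_dotProduct_le {m n : Type*} [Fintype n] (B : Matrix m n ℝ)
    (b : m → ℝ) (hb : 0 ≤ b) (a : n → ℝ) (M : ℝ) (h : ∀ δ, 0 ≤ δ → B *ᵥ δ ≤ b → a ⬝ᵥ δ ≤ M)
    {η : n → ℝ} (hη : 0 ≤ η) (hBη : B *ᵥ η ≤ 0) : a ⬝ᵥ η ≤ 0 := by
  -- Every `s • η` with `s ≥ 0` is feasible, so `a ⬝ᵥ η > 0` would make the objective unbounded.
  by_contra! hpos
  have hs : 0 ≤ (|M| + 1) / (a ⬝ᵥ η) := by positivity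
  have := h _ (smul_nonneg hs hη)
    (by rw [mulVec_smul]; exact (smul_nonpos_of_nonneg_of_nonpos hs hBη).trans hb)
  rw [dotProduct_smul, smul_eq_mul, div_mul_cancel₀ _ hpos.ne'] at this
  linarith [le_abs_self M]

variable {m n : Type*} [Fintype m] [Fintype n]

/-- **Farkas' lemma**. -/
theorem exists_nonneg_vecMul_eq_of_forall_mulVec_nonneg (A : Matrix m n ℝ) (t : n → ℝ)
    (h : ∀ y, 0 ≤ A *ᵥ y → 0 ≤ t ⬝ᵥ y) : ∃ c, 0 ≤ c ∧ c ᵥ* A = t := by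
  classical
  let C : ProperCone ℝ (n → ℝ) :=
    { toSubmodule := (PointedCone.positive ℝ (m → ℝ)).map A.vecMulLinear
      isClosed' := by
        convert isClosed_setOf_nonneg_sum_smul (fun i => A i) using 1
        ext x
        simp [vecMul_eq_sum] }
  have hC : ∀ x, x ∈ C ↔ ∃ c, 0 ≤ c ∧ c ᵥ* A = x := fun x => by
    change x ∈ (PointedCone.positive ℝ (m → ℝ)).map A.vecMulLinear ↔ _
    simp [PointedCone.mem_positive]
  by_contra! ht
  obtain ⟨f, hf, hft⟩ := C.hyperplane_separation_point (x₀ := t) fun h' => by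
    obtain ⟨c, hc, hct⟩ := (hC t).mp h'
    exact ht c hc hct
  set y : n → ℝ := fun o => f (fun j => if o = j then 1 else 0)
  have hfy : ∀ x, f x = x ⬝ᵥ y := fun x => by
    simpa [dotProduct, y] using LinearMap.pi_apply_eq_sum_univ (f : (n → ℝ) →ₗ[ℝ] ℝ) x
  have hAy : 0 ≤ A *ᵥ y := fun i => by
    have := hf (A i) ((hC _).mpr ⟨Pi.single i 1, by simp [Pi.single_nonneg], by simp [row]⟩)
    rwa [hfy] at this
  exact (h y hAy).not_gt (hfy t ▸ hft)

/-- **Strong duality** of linear programming. -/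
theorem exists_dual_of_forall_dotProduct_le (B : Matrix m n ℝ) (b : m → ℝ) (hb : 0 ≤ b)
    (a : n → ℝ) (M : ℝ) (h : ∀ δ, 0 ≤ δ → B *ᵥ δ ≤ b → a ⬝ᵥ δ ≤ M) :
    ∃ u, 0 ≤ u ∧ a ≤ u ᵥ* B ∧ u ⬝ᵥ b ≤ M := by
  classical
  -- Homogenise: `δ` corresponds to the ray of `(1, δ)`, and Farkas' lemma for the rows
  -- `(b i, -B i)` together with the unit vectors and the target `(M, -a)` produces the dual `u`.
  let A : Matrix m (Option n) ℝ := of fun i o => o.elim (b i) fun j => -B i j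
  let t : Option n → ℝ := fun o => o.elim M fun j => -a j
  have hA_none : ∀ c, (c ᵥ* A) none = c ⬝ᵥ b := fun c => by simp [A, vecMul, dotProduct]
  have hA_some : ∀ c j, (c ᵥ* A) (some j) = -(c ᵥ* B) j := fun c j => by
    simp [A, vecMul, dotProduct]
  have hfarkas : ∀ y, 0 ≤ A.fromRows (1 : Matrix (Option n) _ ℝ) *ᵥ y → 0 ≤ t ⬝ᵥ y := by
    intro y hy
    rw [fromRows_mulVec, one_mulVec, Sum.nonneg_elim_iff] at hy
    obtain ⟨hAy, hy⟩ := hy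
    set τ := y none
    set η := y ∘ some
    have hη : 0 ≤ η := fun j => hy (some j)
    have hBη : B *ᵥ η ≤ τ • b := fun i => by
      have := hAy i
      simp [A, mulVec, dotProduct, Fintype.sum_option] at this
      simpa [mulVec, dotProduct, mul_comm, τ, η] using this
    have ht : t ⬝ᵥ y = M * τ - a ⬝ᵥ η := by
      simp [t, dotProduct, Fintype.sum_option, sub_eq_add_neg, τ, η]
    rw [ht, sub_nonneg]
    rcases (show 0 ≤ τ from hy none).eq_or_lt with hτ | hτ
    · rw [← hτ, zero_smul] at hBη
      rw [← hτ, mul_zero]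
      exact dotProduct_nonpos_of_forall_dotProduct_le B b hb a M h hη hBη
    · have hδ : B *ᵥ (τ⁻¹ • η) ≤ b := by
        rw [mulVec_smul]
        calc τ⁻¹ • B *ᵥ η ≤ τ⁻¹ • τ • b :=
              smul_le_smul_of_nonneg_left hBη (inv_nonneg.mpr hτ.le)
          _ = b := inv_smul_smul₀ hτ.ne' b
      have := h _ (smul_nonneg (inv_nonneg.mpr hτ.le) hη) hδ
      rw [dotProduct_smul, smul_eq_mul, inv_mul_le_iff₀ hτ] at this
      linarith
  obtain ⟨c, hc, hct⟩ := exists_nonneg_vecMul_eq_of_forall_mulVec_nonneg _ t hfarkas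
  rw [vecMul_fromRows, vecMul_one] at hct
  refine ⟨c ∘ Sum.inl, fun i => hc _, fun j => ?_, ?_⟩
  · have := congrFun hct (some j)
    have h2 : 0 ≤ c (Sum.inr (some j)) := hc _
    simp only [Pi.add_apply, hA_some, t, Option.elim_some, Function.comp_apply] at this
    linarith
  · have := congrFun hct none
    have h2 : 0 ≤ c (Sum.inr none) := hc _
    simp only [Pi.add_apply, hA_none, t, Option.elim_none, Function.comp_apply] at this
    linarith

theorem forall_dotProduct_le_iff_exists_dual (B : Matrix m n ℝ) (b : m → ℝ) (hb : 0 ≤ b)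
    (a : n → ℝ) (M : ℝ) :
    (∀ δ, 0 ≤ δ → B *ᵥ δ ≤ b → a ⬝ᵥ δ ≤ M) ↔ ∃ u, 0 ≤ u ∧ a ≤ u ᵥ* B ∧ u ⬝ᵥ b ≤ M := by
  refine ⟨exists_dual_of_forall_dotProduct_le B b hb a M, ?_⟩
  rintro ⟨u, hu, hau, hub⟩ δ hδ hBδ
  calc a ⬝ᵥ δ ≤ (u ᵥ* B) ⬝ᵥ δ := dotProduct_le_dotProduct_of_nonneg_right hau hδ
    _ = u ⬝ᵥ (B *ᵥ δ) := (dotProduct_mulVec u B δ).symm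
    _ ≤ u ⬝ᵥ b := dotProduct_le_dotProduct_of_nonneg_left hBδ hu
    _ ≤ M := hub

end Matrix

section Window

variable {K : ℕ}

def window (W : ℕ) (k : Fin K) : Finset (Fin K) :=
  Finset.univ.filter fun l : Fin K => (k : ℕ) + 1 - W ≤ (l : ℕ) ∧ (l : ℕ) ≤ (k : ℕ)

def truncate (kr : ℕ) (v : Fin K → ℝ) : Fin K → ℝ := fun l => if (l : ℕ) ≤ kr then v l else 0

/-- Constraints `δ ≤ 1` and window sums `≤ g` of the inner program of row `kr`: only the windows
ending at `k ≤ kr` matter there, the rows of the others are zero. -/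
def windowMatrix (W kr : ℕ) : Matrix (Fin K ⊕ Fin K) (Fin K) ℝ :=
  fromRows 1 (of fun k l => if (k : ℕ) ≤ kr ∧ l ∈ window W k then 1 else 0)

theorem mem_DKplus_iff {W g : ℕ} {δ : Fin K → ℝ} :
    δ ∈ DKplus K W g ↔ 0 ≤ δ ∧ δ ≤ 1 ∧ ∀ k, ∑ l ∈ window W k, δ l ≤ g := by
  constructor
  · rintro ⟨⟨habs, hwin⟩, hδ⟩
    refine ⟨hδ, fun l => (abs_le.mp (habs l)).2, fun k => ?_⟩
    exact (Finset.sum_congr rfl fun l _ => (abs_of_nonneg (hδ l)).symm).trans_le (hwin k)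
  · rintro ⟨hδ, hδ1, hwin⟩
    refine ⟨⟨fun l => abs_le.mpr ⟨neg_one_lt_zero.le.trans (hδ l), hδ1 l⟩, fun k => ?_⟩, hδ⟩
    exact (Finset.sum_congr rfl fun l _ => abs_of_nonneg (hδ l)).trans_le (hwin k)

theorem truncate_nonneg {kr : ℕ} {v : Fin K → ℝ} (hv : 0 ≤ v) : 0 ≤ truncate kr v := fun l => by
  unfold truncate
  split_ifs
  exacts [hv l, le_rfl]

theorem truncate_dotProduct (kr : ℕ) (a δ : Fin K → ℝ) :
    truncate kr a ⬝ᵥ δ = ∑ l ∈ Finset.univ.filter (fun l : Fin K => (l : ℕ) ≤ kr), a l * δ l := by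
  simp [truncate, dotProduct, Finset.sum_filter, ite_mul]

theorem windowMatrix_mulVec_le_iff {W kr g : ℕ} {δ : Fin K → ℝ} :
    windowMatrix W kr *ᵥ δ ≤ Sum.elim (1 : Fin K → ℝ) (fun _ => (g : ℝ)) ↔
      δ ≤ 1 ∧ ∀ k : Fin K, (k : ℕ) ≤ kr → ∑ l ∈ window W k, δ l ≤ g := by
  rw [windowMatrix, fromRows_mulVec, one_mulVec, Sum.elim_le_elim_iff]
  refine and_congr_right fun _ => forall_congr' fun k => ?_
  by_cases hk : (k : ℕ) ≤ kr <;> simp [hk, mulVec, dotProduct]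

theorem vecMul_windowMatrix {W kr : ℕ} (Λ Θ : Fin K → ℝ) (l : Fin K) :
    (Sum.elim Λ Θ ᵥ* windowMatrix W kr) l =
      Λ l + ∑ k ∈ Finset.univ.filter (fun k : Fin K => (k : ℕ) ≤ kr ∧ l ∈ window W k), Θ k := by
  rw [windowMatrix, vecMul_fromRows, Sum.elim_comp_inl, Sum.elim_comp_inr, vecMul_one]
  simp [vecMul, dotProduct, Finset.sum_filter]

theorem truncate_mem_DKplus {W g kr : ℕ} {δ : Fin K → ℝ} (hδ : 0 ≤ δ) (hδ1 : δ ≤ 1)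
    (hwin : ∀ k : Fin K, (k : ℕ) ≤ kr → ∑ l ∈ window W k, δ l ≤ g) :
    truncate kr δ ∈ DKplus K W g := by
  refine mem_DKplus_iff.mpr ⟨fun l => ?_, fun l => ?_, fun k => ?_⟩
  · exact truncate_nonneg hδ l
  · unfold truncate; split_ifs
    exacts [hδ1 l, zero_le_one]
  -- Truncated, the window ending at `k` lies inside the one ending at `min k kr`.
  let k' : Fin K := ⟨min k kr, lt_of_le_of_lt (min_le_left _ _) k.2⟩
  have hsub : (window W k).filter (fun l : Fin K => (l : ℕ) ≤ kr) ⊆ window W k' := by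
    intro l hl
    simp only [window, Finset.mem_filter, Finset.mem_univ, true_and, k'] at hl ⊢
    omega
  calc ∑ l ∈ window W k, truncate kr δ l
      = ∑ l ∈ (window W k).filter (fun l : Fin K => (l : ℕ) ≤ kr), δ l :=
        (Finset.sum_filter _ _).symm
    _ ≤ ∑ l ∈ window W k', δ l := Finset.sum_le_sum_of_subset_of_nonneg hsub fun l _ _ => hδ l
    _ ≤ g := hwin k' (min_le_right _ _)

theorem forall_DKplus_iff_forall_windowMatrix {W g kr : ℕ} (a : Fin K → ℝ) (M : ℝ) :
    (∀ δ ∈ DKplus K W g,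
        ∑ l ∈ Finset.univ.filter (fun l : Fin K => (l : ℕ) ≤ kr), a l * δ l ≤ M) ↔
      ∀ δ, 0 ≤ δ → windowMatrix W kr *ᵥ δ ≤ Sum.elim (1 : Fin K → ℝ) (fun _ => (g : ℝ)) →
        truncate kr a ⬝ᵥ δ ≤ M := by
  constructor
  · intro h δ hδ hB
    obtain ⟨hδ1, hwin⟩ := windowMatrix_mulVec_le_iff.mp hB
    rw [truncate_dotProduct]
    refine le_of_eq_of_le (Finset.sum_congr rfl fun l hl => ?_)
      (h _ (truncate_mem_DKplus hδ hδ1 hwin))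
    simp [truncate, (Finset.mem_filter.mp hl).2]
  · intro h δ hδ
    obtain ⟨hδ0, hδ1, hwin⟩ := mem_DKplus_iff.mp hδ
    rw [← truncate_dotProduct]
    exact h δ hδ0 (windowMatrix_mulVec_le_iff.mpr ⟨hδ1, fun k _ => hwin k⟩)

theorem filter_mem_window_eq {W : ℕ} (hW : 0 < W) (kr : ℕ) (l : Fin K) :
    Finset.univ.filter (fun k : Fin K => (k : ℕ) ≤ kr ∧ l ∈ window W k) =
      Finset.univ.filter
        (fun i : Fin K => (l : ℕ) ≤ (i : ℕ) ∧ (i : ℕ) ≤ min kr ((l : ℕ) + W - 1)) :=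
  Finset.filter_congr fun k _ => by
    simp only [window, Finset.mem_filter, Finset.mem_univ, true_and]
    omega

theorem exists_windowMatrix_dual_iff {W g : ℕ} (hW : 0 < W) (kr : ℕ) (a : Fin K → ℝ) (M : ℝ) :
    (∃ u, 0 ≤ u ∧ truncate kr a ≤ u ᵥ* windowMatrix W kr ∧
        u ⬝ᵥ Sum.elim (1 : Fin K → ℝ) (fun _ => (g : ℝ)) ≤ M) ↔
      ∃ Λ Θ : Fin K → ℝ, 0 ≤ Λ ∧ 0 ≤ Θ ∧
        (∀ l : Fin K, (l : ℕ) ≤ kr → a l ≤ Λ l + ∑ i ∈ Finset.univ.filter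
          (fun i : Fin K => (l : ℕ) ≤ (i : ℕ) ∧ (i : ℕ) ≤ min kr ((l : ℕ) + W - 1)), Θ i) ∧
        ∑ l ∈ Finset.univ.filter (fun l : Fin K => (l : ℕ) ≤ kr), Λ l +
          g * ∑ i ∈ Finset.univ.filter (fun i : Fin K => (i : ℕ) ≤ kr), Θ i ≤ M := by
  have hbound : ∀ Λ Θ : Fin K → ℝ, Sum.elim Λ Θ ⬝ᵥ Sum.elim (1 : Fin K → ℝ) (fun _ => (g : ℝ)) =
      ∑ l, Λ l + g * ∑ i, Θ i := fun Λ Θ => by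
    simp [dotProduct, Finset.sum_mul, mul_comm]
  constructor
  · rintro ⟨u, hu, hau, hub⟩
    rw [← Sum.elim_comp_inl_inr u, hbound] at hub
    rw [← Sum.elim_comp_inl_inr u] at hau
    refine ⟨u ∘ Sum.inl, u ∘ Sum.inr, fun l => hu _, fun i => hu _, fun l hl => ?_, ?_⟩
    · have := hau l
      rwa [vecMul_windowMatrix, filter_mem_window_eq hW, truncate, if_pos hl] at this
    · refine le_trans (add_le_add ?_ (mul_le_mul_of_nonneg_left ?_ g.cast_nonneg)) hub
      all_goals
        exact Finset.sum_le_sum_of_subset_of_nonneg (Finset.filter_subset _ _) fun i _ _ => hu _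
  · rintro ⟨Λ, Θ, hΛ, hΘ, hcov, hobj⟩
    refine ⟨Sum.elim (truncate kr Λ) (truncate kr Θ), ?_, fun l => ?_, ?_⟩
    · exact Sum.nonneg_elim_iff.mpr ⟨truncate_nonneg hΛ, truncate_nonneg hΘ⟩
    · rw [vecMul_windowMatrix, filter_mem_window_eq hW]
      by_cases hl : (l : ℕ) ≤ kr
      · simp only [truncate, if_pos hl]
        refine le_of_le_of_eq (hcov l hl) (congrArg _ (Finset.sum_congr rfl fun i hi => ?_))
        rw [if_pos ((Finset.mem_filter.mp hi).2.2.trans (min_le_left _ _))]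
      · rw [truncate, if_neg hl]
        exact add_nonneg (truncate_nonneg hΛ l)
          (Finset.sum_nonneg fun i _ => truncate_nonneg hΘ i)
    · rw [hbound]
      simpa only [truncate, ← Finset.sum_filter] using hobj

end Window

section Robust

variable {K : ℕ}

theorem forall_DKplus_sum_le_iff_exists_dual {W g : ℕ} (hW : 0 < W) (kr : ℕ)
    (a : Fin K → ℝ) (M : ℝ) :
    (∀ δ ∈ DKplus K W g,
        ∑ l ∈ Finset.univ.filter (fun l : Fin K => (l : ℕ) ≤ kr), a l * δ l ≤ M) ↔
      ∃ Λ Θ : Fin K → ℝ, 0 ≤ Λ ∧ 0 ≤ Θ ∧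
        (∀ l : Fin K, (l : ℕ) ≤ kr → a l ≤ Λ l + ∑ i ∈ Finset.univ.filter
          (fun i : Fin K => (l : ℕ) ≤ (i : ℕ) ∧ (i : ℕ) ≤ min kr ((l : ℕ) + W - 1)), Θ i) ∧
        ∑ l ∈ Finset.univ.filter (fun l : Fin K => (l : ℕ) ≤ kr), Λ l +
          g * ∑ i ∈ Finset.univ.filter (fun i : Fin K => (i : ℕ) ≤ kr), Θ i ≤ M :=
  (forall_DKplus_iff_forall_windowMatrix a M).trans <|
    (Matrix.forall_dotProduct_le_iff_exists_dual _ _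
      (Sum.nonneg_elim_iff.mpr ⟨zero_le_one, fun _ => g.cast_nonneg⟩) _ _).trans
      (exists_windowMatrix_dual_iff hW kr a M)

theorem forall_DKplus_mul_sum_le_iff_exists_dual {W g : ℕ} (hW : 0 < W) {Δt γ : ℝ}
    (hΔt : 0 < Δt) (hγ : γ = g * Δt) (kr : ℕ) (c a : Fin K → ℝ) (R : ℝ) :
    (∀ δ ∈ DKplus K W g,
        Δt * ∑ l ∈ Finset.univ.filter (fun l : Fin K => (l : ℕ) ≤ kr), (c l + a l * δ l) ≤ R) ↔
      ∃ Λ Θ : Fin K → ℝ, 0 ≤ Λ ∧ 0 ≤ Θ ∧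
        (∀ l : Fin K, (l : ℕ) ≤ kr → a l ≤ Λ l + ∑ i ∈ Finset.univ.filter
          (fun i : Fin K => (l : ℕ) ≤ (i : ℕ) ∧ (i : ℕ) ≤ min kr ((l : ℕ) + W - 1)), Θ i) ∧
        ∑ l ∈ Finset.univ.filter (fun l : Fin K => (l : ℕ) ≤ kr), (Δt * (c l + Λ l) + γ * Θ l)
          ≤ R := by
  set S := Finset.univ.filter (fun l : Fin K => (l : ℕ) ≤ kr)
  have hscale : ∀ X, Δt * (∑ l ∈ S, c l + X) ≤ R ↔ X ≤ R / Δt - ∑ l ∈ S, c l := fun X => by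
    rw [le_sub_iff_add_le, le_div_iff₀ hΔt]
    constructor <;> intro h <;> linarith
  have hdual : ∀ Λ Θ : Fin K → ℝ, ∑ l ∈ S, (Δt * (c l + Λ l) + γ * Θ l) =
      Δt * (∑ l ∈ S, c l + (∑ l ∈ S, Λ l + g * ∑ l ∈ S, Θ l)) := fun Λ Θ => by
    simp only [Finset.sum_add_distrib, ← Finset.mul_sum, hγ]
    ring
  simp only [Finset.sum_add_distrib, hscale, hdual]
  exact forall_DKplus_sum_le_iff_exists_dual hW kr a _

variable {W g : ℕ} {Δt γ ηp : ℝ}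

theorem robustUpperRow_iff (hW : 0 < W) (hΔt : 0 < Δt) (hγ : γ = g * Δt) (kr : ℕ)
    (xb xr d : Fin K → ℝ) (y0 y1 : ℝ) :
    (∀ δ ∈ DKplus K W g, y0 + Δt * ∑ l ∈ Finset.univ.filter (fun l : Fin K => (l : ℕ) ≤ kr),
        (ηp * (xb l + δ l * xr l) - d l) ≤ y1) ↔
      ∃ Λ Θ : Fin K → ℝ, 0 ≤ Λ ∧ 0 ≤ Θ ∧
        (∀ l : Fin K, (l : ℕ) ≤ kr → ηp * xr l ≤ Λ l + ∑ i ∈ Finset.univ.filter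
          (fun i : Fin K => (l : ℕ) ≤ (i : ℕ) ∧ (i : ℕ) ≤ min kr ((l : ℕ) + W - 1)), Θ i) ∧
        ∑ l ∈ Finset.univ.filter (fun l : Fin K => (l : ℕ) ≤ kr),
          (Δt * (ηp * xb l + Λ l - d l) + γ * Θ l) ≤ y1 - y0 := by
  have hprimal : ∀ (S : Finset (Fin K)) (δ : Fin K → ℝ),
      ∑ l ∈ S, (ηp * (xb l + δ l * xr l) - d l) =
        ∑ l ∈ S, ((ηp * xb l - d l) + ηp * xr l * δ l) :=
    fun S δ => Finset.sum_congr rfl fun l _ => by ring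
  have hdual : ∀ (S : Finset (Fin K)) (Λ Θ : Fin K → ℝ),
      ∑ l ∈ S, (Δt * (ηp * xb l + Λ l - d l) + γ * Θ l) =
        ∑ l ∈ S, (Δt * ((ηp * xb l - d l) + Λ l) + γ * Θ l) :=
    fun S Λ Θ => Finset.sum_congr rfl fun l _ => by ring
  simpa only [hprimal, hdual, le_sub_iff_add_le'] using
    forall_DKplus_mul_sum_le_iff_exists_dual hW hΔt hγ kr (fun l => ηp * xb l - d l)
      (fun l => ηp * xr l) (y1 - y0)

theorem robustLowerRow_iff (hW : 0 < W) (hΔt : 0 < Δt) (hγ : γ = g * Δt) (kr : ℕ)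
    (xb m d : Fin K → ℝ) (y0 y1 : ℝ) :
    (∀ δ ∈ DKplus K W g, y1 ≤ y0 + Δt * ∑ l ∈ Finset.univ.filter (fun l : Fin K => (l : ℕ) ≤ kr),
        (ηp * xb l - m l * δ l - d l)) ↔
      ∃ Λ Θ : Fin K → ℝ, 0 ≤ Λ ∧ 0 ≤ Θ ∧
        (∀ l : Fin K, (l : ℕ) ≤ kr → m l ≤ Λ l + ∑ i ∈ Finset.univ.filter
          (fun i : Fin K => (l : ℕ) ≤ (i : ℕ) ∧ (i : ℕ) ≤ min kr ((l : ℕ) + W - 1)), Θ i) ∧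
        y1 - y0 ≤ ∑ l ∈ Finset.univ.filter (fun l : Fin K => (l : ℕ) ≤ kr),
          (Δt * (ηp * xb l - Λ l - d l) - γ * Θ l) := by
  have hprimal : ∀ (S : Finset (Fin K)) (δ : Fin K → ℝ),
      ∑ l ∈ S, ((d l - ηp * xb l) + m l * δ l) =
        -∑ l ∈ S, (ηp * xb l - m l * δ l - d l) := fun S δ => by
    rw [← Finset.sum_neg_distrib]
    exact Finset.sum_congr rfl fun l _ => by ring
  have hdual : ∀ (S : Finset (Fin K)) (Λ Θ : Fin K → ℝ),
      ∑ l ∈ S, (Δt * ((d l - ηp * xb l) + Λ l) + γ * Θ l) =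
        -∑ l ∈ S, (Δt * (ηp * xb l - Λ l - d l) - γ * Θ l) := fun S Λ Θ => by
    rw [← Finset.sum_neg_distrib]
    exact Finset.sum_congr rfl fun l _ => by ring
  simpa only [hprimal, hdual, mul_neg, neg_le_sub_iff_le_add, sub_le_iff_le_add'] using
    forall_DKplus_mul_sum_le_iff_exists_dual hW hΔt hγ kr (fun l => d l - ηp * xb l) m (y0 - y1)

theorem zero_mem_DKplus (K W g : ℕ) : (0 : Fin K → ℝ) ∈ DKplus K W g :=
  mem_DKplus_iff.mpr ⟨le_rfl, zero_le_one, fun _ => by simp⟩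

theorem robustUpperRows_iff (hW : 0 < W) (hΔt : 0 < Δt) (hγ : γ = g * Δt)
    (xb xr d : Fin K → ℝ) (y0 y1 : ℝ) :
    (∀ δ ∈ DKplus K W g, ∀ k ≤ K, y0 + Δt * ∑ l ∈ Finset.univ.filter
        (fun l : Fin K => (l : ℕ) < k), (ηp * (xb l + δ l * xr l) - d l) ≤ y1) ↔
      y0 ≤ y1 ∧ ∀ kr : Fin K, ∃ Λ Θ : Fin K → ℝ, 0 ≤ Λ ∧ 0 ≤ Θ ∧
        (∀ l : Fin K, (l : ℕ) ≤ kr → ηp * xr l ≤ Λ l + ∑ i ∈ Finset.univ.filter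
          (fun i : Fin K => (l : ℕ) ≤ (i : ℕ) ∧ (i : ℕ) ≤ min (kr : ℕ) ((l : ℕ) + W - 1)), Θ i) ∧
        ∑ l ∈ Finset.univ.filter (fun l : Fin K => (l : ℕ) ≤ kr),
          (Δt * (ηp * xb l + Λ l - d l) + γ * Θ l) ≤ y1 - y0 := by
  simp_rw [← robustUpperRow_iff hW hΔt hγ]
  constructor
  · intro h
    refine ⟨by simpa using h 0 (zero_mem_DKplus K W g) 0 K.zero_le, fun kr δ hδ => ?_⟩
    simpa [Nat.lt_add_one_iff] using h δ hδ (kr + 1) kr.2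
  · rintro ⟨h0, h⟩ δ hδ (_ | kr) hk
    · simpa using h0
    · simpa [Nat.lt_add_one_iff] using h ⟨kr, hk⟩ δ hδ

theorem robustLowerRows_iff (hW : 0 < W) (hΔt : 0 < Δt) (hγ : γ = g * Δt)
    (xb m d : Fin K → ℝ) (y0 y1 : ℝ) :
    (∀ δ ∈ DKplus K W g, ∀ k ≤ K, y1 ≤ y0 + Δt * ∑ l ∈ Finset.univ.filter
        (fun l : Fin K => (l : ℕ) < k), (ηp * xb l - m l * δ l - d l)) ↔
      y1 ≤ y0 ∧ ∀ kr : Fin K, ∃ Λ Θ : Fin K → ℝ, 0 ≤ Λ ∧ 0 ≤ Θ ∧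
        (∀ l : Fin K, (l : ℕ) ≤ kr → m l ≤ Λ l + ∑ i ∈ Finset.univ.filter
          (fun i : Fin K => (l : ℕ) ≤ (i : ℕ) ∧ (i : ℕ) ≤ min (kr : ℕ) ((l : ℕ) + W - 1)), Θ i) ∧
        y1 - y0 ≤ ∑ l ∈ Finset.univ.filter (fun l : Fin K => (l : ℕ) ≤ kr),
          (Δt * (ηp * xb l - Λ l - d l) - γ * Θ l) := by
  simp_rw [← robustLowerRow_iff hW hΔt hγ]
  constructor
  · intro h
    refine ⟨by simpa using h 0 (zero_mem_DKplus K W g) 0 K.zero_le, fun kr δ hδ => ?_⟩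
    simpa [Nat.lt_add_one_iff] using h δ hδ (kr + 1) kr.2
  · rintro ⟨h0, h⟩ δ hδ (_ | kr) hk
    · simpa using h0
    · simpa [Nat.lt_add_one_iff] using h ⟨kr, hk⟩ δ hδ

theorem robustUpperTarget_iff (hW : 0 < W) (hΔt : 0 < Δt) (hγ : γ = g * Δt)
    (xb xr d : Fin K → ℝ) (y0 y1 : ℝ) :
    (∀ δ ∈ DKplus K W g, y0 + Δt * ∑ j, (ηp * (xb j + δ j * xr j) - d j) ≤ y1) ↔
      ∃ Λ Θ : Fin K → ℝ, 0 ≤ Λ ∧ 0 ≤ Θ ∧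
        (∀ j : Fin K, ηp * xr j ≤ Λ j + ∑ i ∈ Finset.univ.filter
          (fun i : Fin K => (j : ℕ) ≤ (i : ℕ) ∧ (i : ℕ) ≤ min (K - 1) ((j : ℕ) + W - 1)), Θ i) ∧
        ∑ j, (Δt * (ηp * xb j + Λ j - d j) + γ * Θ j) ≤ y1 - y0 := by
  have hle : ∀ l : Fin K, (l : ℕ) ≤ K - 1 := fun l => by omega
  simpa only [hle, Finset.filter_true, true_implies] using
    robustUpperRow_iff (ηp := ηp) hW hΔt hγ (K - 1) xb xr d y0 y1

theorem robustLowerTarget_iff (hW : 0 < W) (hΔt : 0 < Δt) (hγ : γ = g * Δt)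
    (xb m d : Fin K → ℝ) (y0 y1 : ℝ) :
    (∀ δ ∈ DKplus K W g, y1 ≤ y0 + Δt * ∑ j, (ηp * xb j - m j * δ j - d j)) ↔
      ∃ Λ Θ : Fin K → ℝ, 0 ≤ Λ ∧ 0 ≤ Θ ∧
        (∀ j : Fin K, m j ≤ Λ j + ∑ i ∈ Finset.univ.filter
          (fun i : Fin K => (j : ℕ) ≤ (i : ℕ) ∧ (i : ℕ) ≤ min (K - 1) ((j : ℕ) + W - 1)), Θ i) ∧
        y1 - y0 ≤ ∑ j, (Δt * (ηp * xb j - Λ j - d j) - γ * Θ j) := by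
  have hle : ∀ l : Fin K, (l : ℕ) ≤ K - 1 := fun l => by omega
  simpa only [hle, Finset.filter_true, true_implies] using
    robustLowerRow_iff (ηp := ηp) hW hΔt hγ (K - 1) xb m d y0 y1

end Robust

theorem rprimeFeasible_iff_exists_rdoubleFeasible {Δt ηp ηm γ γh : ℝ} {K W g Wh gh : ℕ}
    (hΔt : 0 < Δt) (hW : 0 < W) (hWh : 0 < Wh) (hγ : γ = g * Δt) (hγh : γh = gh * Δt)
    {d ybarp ybarm : Fin K → ℝ} {ylo yhi yl0 yu0 ylh yuh ystar : ℝ}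
    {p : (Fin K → ℝ) × (Fin K → ℝ)} {m : Fin K → ℝ} {z : ℝ} :
    RprimeFeasible Δt ηp ηm W g Wh gh d ybarp ybarm ylo yhi yl0 yu0 ylh yuh ystar p m z ↔
      ∃ lp lm tp tm : Fin K → ℝ, ∃ Lp Lm Tp Tm : Fin K → Fin K → ℝ,
        RdoubleFeasible Δt ηp ηm γ γh W Wh d ybarp ybarm ylo yhi yl0 yu0 ylh yuh ystar p m z
          lp lm tp tm Lp Lm Tp Tm := by
  rw [RprimeFeasible, robustUpperRows_iff hW hΔt hγ, robustLowerRows_iff hW hΔt hγ,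
    robustUpperTarget_iff hWh hΔt hγh, robustLowerTarget_iff hWh hΔt hγh]
  constructor
  · rintro ⟨hbox, hm, ⟨hyu, hU⟩, ⟨hyl, hL⟩, ⟨lp, tp, hlp, htp, hcovlp, hobjlp⟩,
      ⟨lm, tm, hlm, htm, hcovlm, hobjlm⟩⟩
    choose Lp Tp hLp hTp hcovLp hobjLp using hU
    choose Lm Tm hLm hTm hcovLm hobjLm using hL
    exact ⟨lp, lm, tp, tm, Lp, Lm, Tp, Tm, fun j => ⟨hlp j, hlm j, htp j, htm j⟩,
      fun i j => ⟨hLp i j, hLm i j, hTp i j, hTm i j⟩, hbox, hm, hyu, hyl, hobjLp, hobjLm,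
      by linarith, by linarith, hcovLp, hcovLm, hcovlp, hcovlm⟩
  · rintro ⟨lp, lm, tp, tm, Lp, Lm, Tp, Tm, hn, hN, hbox, hm, hyu, hyl, hU, hL, hobjlp, hobjlm,
      hcovLp, hcovLm, hcovlp, hcovlm⟩
    exact ⟨hbox, hm,
      ⟨hyu, fun kr => ⟨Lp kr, Tp kr, fun l => (hN kr l).1, fun l => (hN kr l).2.2.1,
        hcovLp kr, hU kr⟩⟩,
      ⟨hyl, fun kr => ⟨Lm kr, Tm kr, fun l => (hN kr l).2.1, fun l => (hN kr l).2.2.2,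
        hcovLm kr, hL kr⟩⟩,
      ⟨lp, tp, fun j => (hn j).1, fun j => (hn j).2.2.1, hcovlp, by linarith⟩,
      ⟨lm, tm, fun j => (hn j).2.1, fun j => (hn j).2.2.2, hcovlm, by linarith⟩⟩

theorem stmt_19_general (Δt : ℝ) (K W g Wh gh : ℕ) (hΔt : 0 < Δt)
    (hg : 0 < g) (hgW : g ≤ W)
    (hgh : 0 < gh) (hghWh : gh ≤ Wh)
    (γ γh : ℝ) (hγ : γ = g * Δt) (hγh : γh = gh * Δt)
    (ηp ηm : ℝ)
    (d : Fin K → ℝ) (ylo yhi : ℝ)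
    (yl0 yu0 : ℝ) (ylh yuh : ℝ)
    (ybarp ybarm : Fin K → ℝ)
    (ystar pstar : ℝ)
    (XK : Set ((Fin K → ℝ) × (Fin K → ℝ)))
    (cK : (Fin K → ℝ) × (Fin K → ℝ) → ℝ) :
    sInf {v : ℝ | ∃ p ∈ XK, ∃ m : Fin K → ℝ, ∃ z : ℝ,
        RprimeFeasible Δt ηp ηm W g Wh gh d ybarp ybarm
          ylo yhi yl0 yu0 ylh yuh ystar p m z ∧
        v = cK p + pstar * z} =
      sInf {v : ℝ | ∃ p ∈ XK, ∃ m : Fin K → ℝ, ∃ z : ℝ,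
        ∃ lp lm tp tm : Fin K → ℝ, ∃ Lp Lm Tp Tm : Fin K → Fin K → ℝ,
        RdoubleFeasible Δt ηp ηm γ γh W Wh d ybarp ybarm
          ylo yhi yl0 yu0 ylh yuh ystar p m z lp lm tp tm Lp Lm Tp Tm ∧
        v = cK p + pstar * z} := by
  simp only [rprimeFeasible_iff_exists_rdoubleFeasible hΔt (hg.trans_le hgW)
    (hgh.trans_le hghWh) hγ hγh, exists_and_right]

/-- Theorem 3, linear programming reformulation: the linear
robust problem (R'_K) and the linear program (R''_K) have the same optimal
value. -/
theorem stmt_19 (Δt : ℝ) (K W g Wh gh : ℕ) (hΔt : 0 < Δt) (hK : 0 < K)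
    (hg : 0 < g) (hgW : g ≤ W) (hWK : W ≤ K)
    (hgh : 0 < gh) (hghWh : gh ≤ Wh) (hWhK : Wh ≤ K)
    (γ γh : ℝ) (hγ : γ = g * Δt) (hγh : γh = gh * Δt)
    (ηp ηm : ℝ) (hηp : ηp ∈ Ioc (0:ℝ) 1) (hηm : ηm ∈ Ioc (0:ℝ) 1)
    (d : Fin K → ℝ) (ylo yhi : ℝ) (hy : ylo ≤ yhi)
    (yl0 yu0 : ℝ) (hy0 : yl0 ≤ yu0) (ylh yuh : ℝ) (hyh : ylh ≤ yuh)
    (ybarp ybarm : Fin K → ℝ) (hybarp : ∀ l, 0 ≤ ybarp l) (hybarm : ∀ l, 0 ≤ ybarm l)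
    (ystar pstar : ℝ) (hpstar : 0 ≤ pstar)
    (XK : Set ((Fin K → ℝ) × (Fin K → ℝ)))
    (hXK : ∀ p ∈ XK, (∀ l, 0 ≤ p.1 l) ∧ (∀ l, 0 ≤ p.2 l))
    (cK : (Fin K → ℝ) × (Fin K → ℝ) → ℝ) (hcK : IsLinearMap ℝ cK) :
    sInf {v : ℝ | ∃ p ∈ XK, ∃ m : Fin K → ℝ, ∃ z : ℝ,
        RprimeFeasible Δt ηp ηm W g Wh gh d ybarp ybarm
          ylo yhi yl0 yu0 ylh yuh ystar p m z ∧
        v = cK p + pstar * z} =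
      sInf {v : ℝ | ∃ p ∈ XK, ∃ m : Fin K → ℝ, ∃ z : ℝ,
        ∃ lp lm tp tm : Fin K → ℝ, ∃ Lp Lm Tp Tm : Fin K → Fin K → ℝ,
        RdoubleFeasible Δt ηp ηm γ γh W Wh d ybarp ybarm
          ylo yhi yl0 yu0 ylh yuh ystar p m z lp lm tp tm Lp Lm Tp Tm ∧
        v = cK p + pstar * z} :=
  stmt_19_general Δt K W g Wh gh hΔt hg hgW hgh hghWh γ γh hγ hγh ηp ηm d ylo yhi yl0 yu0 ylh yuh
    ybarp ybarm ystar pstar XK cK
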